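/- arXiv:1308.3133 — 9 statements merged into one kernel-verified Lean document; each statement's English description precedes it below -/
import Mathlib

section
/- If M is a positive integer not divisible by 3 and M ≡ 2 (mod 3), then the only element α of the 3-adic Cantor set Σ₃ with M·α also in Σ₃ is α = 0. -/
open scoped BigOperators

instance : Fact (Nat.Prime 3) := ⟨by norm_num⟩

/-- The 3-adic Cantor set: 3-adic integers all of whose digits are 0 or 1. -/
def Sigma3 : Set ℤ_[3] :=
  {x | ∃ a : ℕ → ℕ, (∀ n, a n ≤ 1) ∧ x = ∑' n : ℕ, (a n : ℤ_[3]) * 3 ^ n}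

/-!
If `α` and `u * α` both lie in `Σ₃`, where `u ≡ 2 (mod 3)`, their last digits `c, d ∈ {0, 1}`
satisfy `2c ≡ d (mod 3)`, which forces `c = d = 0`. Dividing both by `3` gives a new pair
`(β, u * β)` in `Σ₃` with `α = 3β`, so `α` is divisible by every power of `3`, i.e. `α = 0`.
-/

namespace PadicInt

theorem eq_zero_of_forall_pow_dvd {p : ℕ} [Fact p.Prime] {x : ℤ_[p]}
    (hx : ∀ n : ℕ, (p : ℤ_[p]) ^ n ∣ x) : x = 0 := by
  refine ext_of_toZModPow.mp fun n => ?_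
  rw [map_zero, ← RingHom.mem_ker, ker_toZModPow]
  exact Ideal.mem_span_singleton.mpr (hx n)

end PadicInt

namespace Sigma3

theorem summable_digits (a : ℕ → ℕ) :
    Summable fun n : ℕ => (a n : ℤ_[3]) * 3 ^ n := by
  refine Summable.of_norm_bounded (summable_geometric_of_lt_one (r := (3 : ℝ)⁻¹)
    (by norm_num) (by norm_num)) fun n => ?_
  calc ‖(a n : ℤ_[3]) * 3 ^ n‖ = ‖(a n : ℤ_[3])‖ * ‖(3 : ℤ_[3])‖ ^ n := by
        rw [norm_mul, norm_pow]
    _ ≤ 1 * (3 : ℝ)⁻¹ ^ n := by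
        gcongr
        · exact PadicInt.norm_le_one _
        · simpa using (PadicInt.norm_p (p := 3)).le
    _ = (3 : ℝ)⁻¹ ^ n := one_mul _

theorem exists_eq_digit_add_three_mul {x : ℤ_[3]} (hx : x ∈ Sigma3) :
    ∃ c : ℕ, c ≤ 1 ∧ ∃ y ∈ Sigma3, x = (c : ℤ_[3]) + 3 * y := by
  obtain ⟨a, ha, rfl⟩ := hx
  refine ⟨a 0, ha 0, ∑' n : ℕ, (a (n + 1) : ℤ_[3]) * 3 ^ n,
    ⟨fun n => a (n + 1), fun n => ha (n + 1), rfl⟩, ?_⟩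
  rw [(summable_digits a).tsum_eq_zero_add, ← (summable_digits fun n => a (n + 1)).tsum_mul_left]
  simp only [pow_zero, mul_one, pow_succ]
  congr 1
  exact tsum_congr fun n => by ring

theorem zero_mem : (0 : ℤ_[3]) ∈ Sigma3 :=
  ⟨fun _ => 0, fun _ => zero_le_one, by simp⟩

variable {u : ℤ_[3]}

theorem exists_eq_three_mul_of_mul_mem (hu : PadicInt.toZMod u = 2) {x : ℤ_[3]}
    (hx : x ∈ Sigma3) (hux : u * x ∈ Sigma3) :
    ∃ y ∈ Sigma3, u * y ∈ Sigma3 ∧ x = 3 * y := by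
  obtain ⟨c, hc, y, hy, rfl⟩ := exists_eq_digit_add_three_mul hx
  obtain ⟨d, hd, z, hz, hdz⟩ := exists_eq_digit_add_three_mul hux
  have hcd : 2 * (c : ZMod 3) = d := by
    have h3 : PadicInt.toZMod (3 : ℤ_[3]) = 0 := by
      rw [map_ofNat]
      decide
    simpa [hu, h3] using congrArg PadicInt.toZMod hdz
  obtain ⟨rfl, rfl⟩ : c = 0 ∧ d = 0 := by
    interval_cases c <;> interval_cases d <;> revert hcd <;> decide
  refine ⟨y, hy, ?_, by simp⟩
  have huyz : 3 * (u * y) = 3 * z := by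
    simp only [Nat.cast_zero, zero_add] at hdz
    linear_combination hdz
  rwa [mul_left_cancel₀ (by norm_num) huyz]

theorem pow_dvd_of_mul_mem (hu : PadicInt.toZMod u = 2) (n : ℕ) :
    ∀ x ∈ Sigma3, u * x ∈ Sigma3 → (3 : ℤ_[3]) ^ n ∣ x := by
  induction n with
  | zero => simp
  | succ n ih =>
    intro x hx hux
    obtain ⟨y, hy, huy, rfl⟩ := exists_eq_three_mul_of_mul_mem hu hx hux
    rw [pow_succ']
    exact mul_dvd_mul_left 3 (ih y hy huy)

end Sigma3

theorem C1M_eq_zero_of_two_mod_three_general (M : ℕ)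
    (h2 : M % 3 = 2) :
    {α : ℤ_[3] | α ∈ Sigma3 ∧ (M : ℤ_[3]) * α ∈ Sigma3} = {0} := by
  have hM : PadicInt.toZMod (M : ℤ_[3]) = 2 := by
    rw [map_natCast, ← ZMod.natCast_mod, h2]
    rfl
  ext α
  constructor
  · rintro ⟨hα, hMα⟩
    exact PadicInt.eq_zero_of_forall_pow_dvd fun n => by
      simpa using Sigma3.pow_dvd_of_mul_mem hM n α hα hMα
  · rintro rfl
    exact ⟨Sigma3.zero_mem, by simpa using Sigma3.zero_mem⟩

theorem C1M_eq_zero_of_two_mod_three (M : ℕ) (hM : 0 < M) (h3 : ¬ (3 ∣ M))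
    (h2 : M % 3 = 2) :
    {α : ℤ_[3] | α ∈ Sigma3 ∧ (M : ℤ_[3]) * α ∈ Sigma3} = {0} :=
  C1M_eq_zero_of_two_mod_three_general M h2
end

section
/- If the least significant nonzero 3-adic digit of a positive integer M equals 2, then C(1,M) = {0}. -/
open scoped BigOperators
open Filter Topology

lemma sigma3_summable (a : ℕ → ℕ) :
    Summable (fun n : ℕ => (a n : ℤ_[3]) * 3 ^ n) := by
  apply NonarchimedeanAddGroup.summable_of_tendsto_cofinite_zero
  rw [Nat.cofinite_eq_atTop, tendsto_zero_iff_norm_tendsto_zero]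
  have h1 : Tendsto (fun n : ℕ => ((3:ℝ)⁻¹) ^ n) atTop (nhds 0) := by
    apply tendsto_pow_atTop_nhds_zero_of_lt_one <;> norm_num
  refine squeeze_zero (fun n => norm_nonneg _) (fun n => ?_) h1
  calc ‖(a n : ℤ_[3]) * 3 ^ n‖ ≤ ‖(a n : ℤ_[3])‖ * ‖(3:ℤ_[3]) ^ n‖ := norm_mul_le _ _
    _ ≤ 1 * ‖(3:ℤ_[3]) ^ n‖ := by
        gcongr; exact PadicInt.norm_le_one _
    _ = ((3:ℝ)⁻¹) ^ n := by
        rw [one_mul]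
        have : ((3:ℕ) : ℤ_[3]) = (3:ℤ_[3]) := by norm_num
        rw [← this, PadicInt.norm_p_pow]
        rw [zpow_neg, zpow_natCast, inv_pow]
        norm_num

/-- splitting off the first digit -/
lemma sigma3_split (a : ℕ → ℕ) :
    ∑' n : ℕ, (a n : ℤ_[3]) * 3 ^ n
      = (a 0 : ℤ_[3]) + 3 * ∑' n : ℕ, (a (n+1) : ℤ_[3]) * 3 ^ n := by
  rw [Summable.tsum_eq_zero_add (sigma3_summable a)]
  simp only [pow_zero, mul_one, pow_succ]
  congr 1
  rw [← (sigma3_summable (fun n => a (n+1))).tsum_mul_left 3]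
  exact tsum_congr fun n => by ring

lemma toZMod_tsum (a : ℕ → ℕ) :
    PadicInt.toZMod (∑' n : ℕ, (a n : ℤ_[3]) * 3 ^ n) = (a 0 : ZMod 3) := by
  rw [sigma3_split a, map_add, map_mul, map_natCast]
  have h3 : PadicInt.toZMod (3 : ℤ_[3]) = 0 := by
    have : ((3:ℕ) : ℤ_[3]) = (3:ℤ_[3]) := by norm_num
    rw [← this, map_natCast]
    decide
  rw [h3, zero_mul, add_zero]

lemma toZMod_mem (x : ℤ_[3]) (hx : x ∈ Sigma3) :
    PadicInt.toZMod x = 0 ∨ PadicInt.toZMod x = 1 := by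
  obtain ⟨a, ha, rfl⟩ := hx
  rw [toZMod_tsum]
  have h01 := ha 0
  interval_cases h : a 0
  · left; rfl
  · right; rfl

lemma div3_mem (x : ℤ_[3]) (hx : x ∈ Sigma3) (h0 : PadicInt.toZMod x = 0) :
    ∃ y ∈ Sigma3, x = 3 * y := by
  obtain ⟨a, ha, rfl⟩ := hx
  rw [toZMod_tsum] at h0
  have ha0 : a 0 = 0 := by
    have h01 := ha 0
    interval_cases h : a 0
    · rfl
    · simp at h0
  refine ⟨∑' n : ℕ, (a (n+1) : ℤ_[3]) * 3 ^ n, ⟨fun n => a (n+1), fun n => ha _, rfl⟩, ?_⟩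
  rw [sigma3_split a, ha0]
  simp

lemma shift_down (m : ℕ) (y : ℤ_[3]) (hx : (3:ℤ_[3]) ^ m * y ∈ Sigma3) : y ∈ Sigma3 := by
  induction m generalizing y with
  | zero => simpa using hx
  | succ m ih =>
    have h3y : (3:ℤ_[3]) * y ∈ Sigma3 := by
      apply ih
      have h : (3:ℤ_[3]) ^ m * (3 * y) = 3 ^ (m+1) * y := by ring
      rwa [h]
    have h0 : PadicInt.toZMod ((3:ℤ_[3]) * y) = 0 := by
      rw [map_mul]
      have : PadicInt.toZMod (3 : ℤ_[3]) = 0 := by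
        have : ((3:ℕ) : ℤ_[3]) = (3:ℤ_[3]) := by norm_num
        rw [← this, map_natCast]; decide
      rw [this, zero_mul]
    obtain ⟨y', hy', heq⟩ := div3_mem _ h3y h0
    have : y = y' := by
      have h3 : (3:ℤ_[3]) ≠ 0 := by norm_num
      exact mul_left_cancel₀ h3 heq
    rwa [this]

lemma tsum_shift (k : ℕ) (a : ℕ → ℕ) (hz : ∀ n < k, a n = 0) :
    ∑' n : ℕ, (a n : ℤ_[3]) * 3 ^ n = 3 ^ k * ∑' n : ℕ, (a (n + k) : ℤ_[3]) * 3 ^ n := by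
  induction k generalizing a with
  | zero => simp
  | succ k ih =>
    have ha0 : a 0 = 0 := hz 0 (Nat.succ_pos k)
    rw [sigma3_split a, ha0]
    have hz' : ∀ n < k, a (n + 1) = 0 := fun n hn => hz (n + 1) (by omega)
    rw [ih (fun n => a (n + 1)) hz']
    have he : ∑' n : ℕ, (a (n + k + 1) : ℤ_[3]) * 3 ^ n
        = ∑' n : ℕ, (a (n + (k + 1)) : ℤ_[3]) * 3 ^ n :=
      tsum_congr fun n => by rw [show n + k + 1 = n + (k+1) from by omega]
    rw [he]
    push_cast
    ring

lemma exists_unit_part (α : ℤ_[3]) (hα : α ∈ Sigma3) (hne : α ≠ 0) :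
    ∃ k : ℕ, ∃ β ∈ Sigma3, α = 3 ^ k * β ∧ PadicInt.toZMod β = 1 := by
  obtain ⟨a, ha, rfl⟩ := hα
  have hex : ∃ n, a n ≠ 0 := by
    by_contra h
    push_neg at h
    apply hne
    simp [h]
  classical
  set k := Nat.find hex with hk
  have hak : a k ≠ 0 := Nat.find_spec hex
  have hlt : ∀ n < k, a n = 0 := fun n hn => by
    by_contra h; exact Nat.find_min hex hn h
  refine ⟨k, ∑' n : ℕ, (a (n + k) : ℤ_[3]) * 3 ^ n,
    ⟨fun n => a (n + k), fun n => ha _, rfl⟩, tsum_shift k a hlt, ?_⟩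
  rw [toZMod_tsum]
  have : a k = 1 := by have := ha k; omega
  simp [this]

theorem C1M_eq_zero_of_least_digit_two (M : ℕ) (hM : 0 < M)
    (h2 : (M / 3 ^ (padicValNat 3 M)) % 3 = 2) :
    {α : ℤ_[3] | α ∈ Sigma3 ∧ (M : ℤ_[3]) * α ∈ Sigma3} = {0} := by
  ext α
  simp only [Set.mem_setOf_eq, Set.mem_singleton_iff]
  constructor
  · rintro ⟨hα, hMα⟩
    by_contra hne
    obtain ⟨k, β, hβ, hαeq, hβ1⟩ := exists_unit_part α hα hne
    set v := padicValNat 3 M with hv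
    set M' := M / 3 ^ v with hM'
    have hdvd : 3 ^ v ∣ M := pow_padicValNat_dvd
    have hMeq : M = 3 ^ v * M' := (Nat.mul_div_cancel' hdvd).symm
    have hcast : (M : ℤ_[3]) = 3 ^ v * (M' : ℤ_[3]) := by
      rw [hMeq]; push_cast; ring
    have hprod : (M : ℤ_[3]) * α = 3 ^ (v + k) * ((M' : ℤ_[3]) * β) := by
      rw [hcast, hαeq]; ring
    rw [hprod] at hMα
    have hmem : (M' : ℤ_[3]) * β ∈ Sigma3 := shift_down (v + k) _ hMα
    have htZ : PadicInt.toZMod ((M' : ℤ_[3]) * β) = 2 := by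
      rw [map_mul, hβ1, mul_one, map_natCast]
      have : ((M' % 3 : ℕ) : ZMod 3) = (M' : ZMod 3) := ZMod.natCast_mod M' 3
      rw [← this, h2]
      rfl
    rcases toZMod_mem _ hmem with h | h <;> rw [htZ] at h <;> exact absurd h (by decide)
  · rintro rfl
    have h0 : (0 : ℤ_[3]) ∈ Sigma3 := ⟨fun _ => 0, fun _ => Nat.zero_le _, by simp⟩
    exact ⟨h0, by rwa [mul_zero]⟩
end

section
/- For all k ≥ 6, the unique real root β_k > 1 of λ^k − λ^{k−1} − 1 = 0 satisfies 1 + (log k)/k − 2(log log k)/k ≤ β_k ≤ 1 + (log k)/k. -/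
/-!
On `(1, ∞)` the root `β` is the unique solution of `x ^ (k - 1) * (x - 1) = 1`, whose left side
is increasing there, so each bound amounts to evaluating `x ^ (k - 1) * (x - 1)` at the candidate
point. At the lower point `x`, `x ^ (k - 1) ≤ exp (k (x - 1)) = k / log² k`. At the upper point
`a = 1 + L / k`, `L = log k`, the bound `log (1 + t) ≥ 2t / (2 + t)` reduces
`(k - 1) log a ≥ L - log L` to `L (L + 2) / (2k + L) ≤ log L`; this follows from
`log L ≥ 2 (L - 1) / (L + 1)` and `k = exp L ≥ 1 + L + L² / 2 + L³ / 6`, as soon as `L > 7 / 4`.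
-/

open Real

lemma two_mul_div_add_two_le_log_one_add {a : ℝ} (ha : 0 ≤ a) :
    2 * a / (a + 2) ≤ log (1 + a) := by
  simpa [mul_div_assoc] using le_hasSum (hasSum_log_one_add ha) 0 fun _ _ ↦ by positivity

lemma two_mul_sub_one_div_add_one_le_log {x : ℝ} (hx : 1 ≤ x) :
    2 * (x - 1) / (x + 1) ≤ log x := by
  have h := two_mul_div_add_two_le_log_one_add (sub_nonneg.2 hx)
  rwa [add_sub_cancel, sub_add_eq_add_sub, show x + 2 - 1 = x + 1 by ring] at h

lemma cubic_le_exp_of_nonneg {x : ℝ} (hx : 0 ≤ x) :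
    1 + x + x ^ 2 / 2 + x ^ 3 / 6 ≤ exp x := by
  have h := sum_le_exp_of_nonneg hx 4
  norm_num [Finset.sum_range_succ, Nat.factorial] at h
  linarith

lemma seven_fourths_lt_log {k : ℝ} (hk : 6 ≤ k) : 7 / 4 < log k := by
  have h6 : log 6 = log 2 + log 3 := by
    rw [show (6 : ℝ) = 2 * 3 by norm_num, log_mul two_ne_zero three_ne_zero]
  linarith [log_two_gt_d9, log_three_gt_d9, log_le_log (by norm_num) hk]

lemma log_mul_log_add_two_div_le_log_log {k : ℝ} (hk : 6 ≤ k) :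
    log k * (log k + 2) / (2 * k + log k) ≤ log (log k) := by
  set L := log k with hL
  have hL74 : 7 / 4 < L := seven_fourths_lt_log hk
  have hkL : 1 + L + L ^ 2 / 2 + L ^ 3 / 6 ≤ k := by
    simpa [hL, exp_log (by linarith : 0 < k)] using cubic_le_exp_of_nonneg (by linarith : 0 ≤ L)
  calc L * (L + 2) / (2 * k + L) ≤ 2 * (L - 1) / (L + 1) := by
        rw [div_le_div_iff₀ (by linarith) (by linarith)]
        nlinarith [mul_nonneg (by linarith : (0 : ℝ) ≤ L - 1)
            (by linarith : 0 ≤ k - (1 + L + L ^ 2 / 2 + L ^ 3 / 6)),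
          mul_pos (by linarith : (0 : ℝ) < L - 7 / 4) (by positivity : (0 : ℝ) < L ^ 3)]
    _ ≤ log L := two_mul_sub_one_div_add_one_le_log (by linarith)

lemma pow_mul_sub_one_strictMonoOn (n : ℕ) :
    StrictMonoOn (fun x : ℝ ↦ x ^ n * (x - 1)) (Set.Ici 1) := by
  intro x hx y hy hxy
  simp only [Set.mem_Ici] at hx hy
  exact mul_lt_mul_of_le_of_lt_of_nonneg_of_pos (pow_le_pow_left₀ (by linarith) hxy.le n)
    (by linarith) (by linarith) (by positivity)

section

variable {n : ℕ} {β x : ℝ}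

lemma le_iff_one_le_pow_mul_sub_one (hβ : 1 ≤ β) (hx : 1 ≤ x) (hroot : β ^ n * (β - 1) = 1) :
    β ≤ x ↔ 1 ≤ x ^ n * (x - 1) := by
  rw [← (pow_mul_sub_one_strictMonoOn n).le_iff_le hβ hx, hroot]

lemma le_iff_pow_mul_sub_one_le_one (hβ : 1 ≤ β) (hx : 1 ≤ x) (hroot : β ^ n * (β - 1) = 1) :
    x ≤ β ↔ x ^ n * (x - 1) ≤ 1 := by
  rw [← (pow_mul_sub_one_strictMonoOn n).le_iff_le hx hβ, hroot]

end

section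

variable {k : ℕ} {β : ℝ}

lemma root_le_one_add_log_div (hk : 6 ≤ k) (hβ : 1 < β) (hroot : β ^ (k - 1) * (β - 1) = 1) :
    β ≤ 1 + log k / k := by
  have hk6 : (6 : ℝ) ≤ k := by exact_mod_cast hk
  set L := log k
  have hL0 : 0 < L := by linarith [seven_fourths_lt_log hk6]
  have ht : 0 < L / k := div_pos hL0 (by linarith)
  set a := 1 + L / k with ha
  rw [le_iff_one_le_pow_mul_sub_one hβ.le (by linarith) hroot]
  have hlog_a : 2 * L / (2 * k + L) ≤ log a := by
    convert two_mul_div_add_two_le_log_one_add ht.le using 1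
    field_simp
    ring
  have hexp : L - log L ≤ (k - 1 : ℕ) * log a := by
    rw [Nat.cast_pred (by omega)]
    calc L - log L ≤ L - L * (L + 2) / (2 * k + L) := by
          linarith [log_mul_log_add_two_div_le_log_log hk6]
      _ = (k - 1) * (2 * L / (2 * k + L)) := by field_simp; ring
      _ ≤ (k - 1) * log a := by gcongr; linarith
  have hpow : k / L ≤ a ^ (k - 1) :=
    calc k / L = exp (L - log L) := by rw [exp_sub, exp_log (by linarith), exp_log hL0]
      _ ≤ exp ((k - 1 : ℕ) * log a) := exp_le_exp.2 hexp
      _ = a ^ (k - 1) := by rw [exp_nat_mul, exp_log (by linarith)]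
  calc 1 = k / L * (L / k) := by field_simp
    _ ≤ a ^ (k - 1) * (a - 1) := by rw [ha, add_sub_cancel_left]; gcongr

lemma one_add_log_div_sub_le_root (hk : 1 ≤ log k) (hβ : 1 < β)
    (hroot : β ^ (k - 1) * (β - 1) = 1) : 1 + log k / k - 2 * log (log k) / k ≤ β := by
  set L := log k
  have hk0 : (0 : ℝ) < k := Nat.cast_pos.2 (Nat.pos_of_ne_zero (by rintro rfl; norm_num [L] at hk))
  have hlogL : 0 ≤ log L := log_nonneg hk
  set x := 1 + L / k - 2 * log L / k with hx
  rcases le_or_gt x 1 with hx1 | hx1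
  · linarith
  rw [le_iff_pow_mul_sub_one_le_one hβ.le hx1.le hroot]
  have hkx : k * (x - 1) = L - 2 * log L := by rw [hx]; field_simp; ring
  have hpow : x ^ (k - 1) ≤ k / L ^ 2 :=
    calc x ^ (k - 1) ≤ x ^ k := pow_le_pow_right₀ hx1.le (Nat.sub_le k 1)
      _ ≤ exp (x - 1) ^ k :=
        pow_le_pow_left₀ (by linarith) (by linarith [add_one_le_exp (x - 1)]) k
      _ = exp (L - 2 * log L) := by rw [← exp_nat_mul, hkx]
      _ = k / L ^ 2 := by
        rw [exp_sub, exp_log hk0, show (2 : ℝ) = (2 : ℕ) by norm_num, exp_nat_mul,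
          exp_log (by linarith)]
  calc x ^ (k - 1) * (x - 1) ≤ k / L ^ 2 * (x - 1) := by gcongr
    _ = (L - 2 * log L) / L ^ 2 := by rw [← hkx]; field_simp
    _ ≤ 1 := by rw [div_le_one (by positivity)]; nlinarith

end

theorem root_estimates (k : ℕ) (hk : 6 ≤ k) (β : ℝ) (hβ : 1 < β)
    (hroot : β ^ k - β ^ (k - 1) - 1 = 0) :
    1 + Real.log k / k - 2 * Real.log (Real.log k) / k ≤ β ∧
      β ≤ 1 + Real.log k / k := by
  have hroot' : β ^ (k - 1) * (β - 1) = 1 := by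
    obtain ⟨n, rfl⟩ : ∃ n, k = n + 1 := ⟨k - 1, by omega⟩
    rw [Nat.add_sub_cancel] at hroot ⊢
    linear_combination hroot
  have hL : 1 ≤ log k := by linarith [seven_fourths_lt_log (by exact_mod_cast hk : (6 : ℝ) ≤ k)]
  exact ⟨one_add_log_div_sub_le_root hL hβ hroot', root_le_one_add_log_div hk hβ hroot'⟩
end

section
/- Let A be the 2^k × 2^k matrix with a_{ij} = 1 if 1 ≤ i ≤ 2^{k−1} and j ∈ {2i−1, 2i}, a_{ij} = 1 if i > 2^{k−1} and j = 2(i−2^{k−1})−1, and 0 otherwise. Then the golden ratio (1+√5)/2 is an eigenvalue of A with a strictly positive eigenvector, hence (1+√5)/2 equals the spectral radius of A. -/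
/-!
Weight the basis vector `e_n` by `φ⁻¹ ^ s(n)`, where `s(n)` is the binary digit sum of `n`.
Row `i < 2^(k-1)` of `A_k` picks up the weights of `2i` and `2i+1`, whose sum is
`φ⁻¹ ^ s(i) * (1 + φ⁻¹) = φ * φ⁻¹ ^ s(i)`; row `2^(k-1) + r` picks up the weight of `2r`,
and `s(2r) = s(2^(k-1) + r) - 1`. So this positive vector is a `φ`-eigenvector, and for a
nonnegative matrix an eigenvalue with a positive eigenvector dominates every other eigenvalue
(compare `|v|` with the eigenvector at the index where the ratio is maximal).
-/

noncomputable def phi : ℝ := (1 + Real.sqrt 5) / 2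

/-- The `2^k × 2^k` 0-1 matrix `A_k` (0-indexed version of the 1-indexed
description: `a_{ij} = 1` iff `i ≤ 2^{k-1}` and `j ∈ {2i-1, 2i}`, or
`i > 2^{k-1}` and `j = 2(i - 2^{k-1}) - 1`). -/
def goldMat (k : ℕ) : Matrix (Fin (2 ^ k)) (Fin (2 ^ k)) ℝ := fun i j =>
  if ((i : ℕ) < 2 ^ (k - 1) ∧ ((j : ℕ) = 2 * (i : ℕ) ∨ (j : ℕ) = 2 * (i : ℕ) + 1)) ∨
      (2 ^ (k - 1) ≤ (i : ℕ) ∧ (j : ℕ) = 2 * ((i : ℕ) - 2 ^ (k - 1))) then 1 else 0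

namespace Nat

theorem digits_sum_add_mul {b x : ℕ} (hb : 1 < b) (hx : x < b) (y : ℕ) :
    (b.digits (x + b * y)).sum = x + (b.digits y).sum := by
  by_cases hxy : x = 0 ∧ y = 0
  · simp [hxy.1, hxy.2]
  · rw [digits_add b hb x y hx (by tauto), List.sum_cons]

theorem digits_sum_add_pow_mul {b m r : ℕ} (hb : 1 < b) (hr : r < b ^ m) (c : ℕ) :
    (b.digits (r + b ^ m * c)).sum = (b.digits r).sum + (b.digits c).sum := by
  rcases eq_or_ne c 0 with rfl | hc
  · simp
  have hlen := (digits_length_le_iff hb r).2 hr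
  rw [← Nat.add_sub_cancel' hlen, ← digits_append_zeroes_append_digits hb (Nat.pos_of_ne_zero hc)]
  simp

end Nat

namespace Matrix

variable {n : Type*} [Fintype n]

theorem isRoot_charpoly_iff_exists_mulVec_eq_smul [DecidableEq n] {K : Type*} [Field K]
    (A : Matrix n n K) (μ : K) : A.charpoly.IsRoot μ ↔ ∃ v ≠ 0, A *ᵥ v = μ • v := by
  rw [← charpoly_toLin', ← Module.End.hasEigenvalue_iff_isRoot_charpoly]
  constructor
  · intro h
    obtain ⟨v, hv⟩ := h.exists_hasEigenvector
    exact ⟨v, hv.2, Module.End.mem_eigenspace_iff.1 hv.1⟩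
  · rintro ⟨v, hv, hAv⟩
    exact Module.End.hasEigenvalue_of_hasEigenvector ⟨Module.End.mem_eigenspace_iff.2 hAv, hv⟩

theorem isRoot_charpoly_map_ofReal_of_mulVec_eq_smul [DecidableEq n] {A : Matrix n n ℝ} {r : ℝ}
    {w : n → ℝ} (hw : w ≠ 0) (hAw : A *ᵥ w = r • w) : (A.map (↑)).charpoly.IsRoot (r : ℂ) := by
  have hr : A.charpoly.IsRoot r := (isRoot_charpoly_iff_exists_mulVec_eq_smul A r).2 ⟨w, hw, hAw⟩
  rw [show A.map ((↑) : ℝ → ℂ) = A.map Complex.ofRealHom from rfl, charpoly_map]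
  exact hr.map

theorem norm_le_of_mulVec_eq_smul_of_pos {A : Matrix n n ℝ} (hA : ∀ i j, 0 ≤ A i j)
    {w : n → ℝ} (hw : ∀ i, 0 < w i) {r : ℝ} (hAw : A *ᵥ w = r • w)
    {μ : ℂ} {v : n → ℂ} (hv : v ≠ 0) (hAv : A.map (↑) *ᵥ v = μ • v) : ‖μ‖ ≤ r := by
  obtain ⟨j₀, hj₀⟩ := Function.ne_iff.1 hv
  obtain ⟨i, -, hi⟩ := Finset.exists_max_image Finset.univ (fun j => ‖v j‖ / w j)
    ⟨j₀, Finset.mem_univ _⟩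
  set c := ‖v i‖ / w i
  have hle : ∀ j, ‖v j‖ ≤ c * w j := fun j => (div_le_iff₀ (hw j)).1 (hi j (Finset.mem_univ j))
  have hci : c * w i = ‖v i‖ := div_mul_cancel₀ _ (hw i).ne'
  have hvi : 0 < ‖v i‖ := by
    by_contra! h
    have : ‖v j₀‖ ≤ 0 := by simpa [c, norm_le_zero_iff.1 h] using hle j₀
    exact hj₀ (norm_le_zero_iff.1 this)
  refine le_of_mul_le_mul_right ?_ hvi
  calc ‖μ‖ * ‖v i‖ = ‖(A.map (↑) *ᵥ v) i‖ := by rw [hAv, Pi.smul_apply, smul_eq_mul, norm_mul]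
    _ ≤ ∑ j, A i j * ‖v j‖ := by
      refine (norm_sum_le _ _).trans_eq (Finset.sum_congr rfl fun j _ => ?_)
      simp only [map_apply, norm_mul, Complex.norm_real, Real.norm_of_nonneg (hA i j)]
    _ ≤ ∑ j, A i j * (c * w j) := by gcongr with j; exacts [hA i j, hle j]
    _ = c * (A *ᵥ w) i := by simp only [mulVec, dotProduct, Finset.mul_sum, mul_left_comm]
    _ = r * ‖v i‖ := by rw [hAw, Pi.smul_apply, smul_eq_mul, mul_left_comm, hci]

end Matrix

open Matrix Real goldenRatio

lemma one_add_inv_goldenRatio : 1 + φ⁻¹ = φ := by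
  rw [inv_goldenRatio, ← sub_eq_add_neg, one_sub_goldenRatio]

noncomputable def goldWeight (n : ℕ) : ℝ := φ⁻¹ ^ (Nat.digits 2 n).sum

lemma goldWeight_pos (n : ℕ) : 0 < goldWeight n := pow_pos (inv_pos.2 goldenRatio_pos) _

lemma goldWeight_two_mul_add_goldWeight_two_mul_add_one (n : ℕ) :
    goldWeight (2 * n) + goldWeight (2 * n + 1) = φ * goldWeight n := by
  have h₀ := Nat.digits_sum_add_mul one_lt_two two_pos n
  have h₁ := Nat.digits_sum_add_mul one_lt_two one_lt_two n
  rw [zero_add, zero_add] at h₀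
  rw [add_comm 1] at h₁
  rw [goldWeight, goldWeight, goldWeight, h₀, h₁, pow_add, pow_one, ← one_add_mul,
    one_add_inv_goldenRatio]

lemma goldWeight_two_mul {m r : ℕ} (hr : r < 2 ^ m) :
    goldWeight (2 * r) = φ * goldWeight (2 ^ m + r) := by
  have h₀ := Nat.digits_sum_add_mul one_lt_two two_pos r
  have h₁ := Nat.digits_sum_add_pow_mul one_lt_two hr 1
  rw [zero_add, zero_add] at h₀
  rw [mul_one, add_comm r] at h₁
  rw [goldWeight, goldWeight, h₀, h₁, Nat.digits_of_lt 2 1 one_ne_zero one_lt_two,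
    List.sum_singleton, pow_succ, mul_left_comm, mul_inv_cancel₀ goldenRatio_ne_zero, mul_one]

lemma goldMat_nonneg (k : ℕ) (i j : Fin (2 ^ k)) : 0 ≤ goldMat k i j := by
  unfold goldMat
  split_ifs <;> norm_num

theorem goldMat_mulVec_apply_of_lt {k : ℕ} (hk : k ≠ 0) (f : ℕ → ℝ) {i : Fin (2 ^ k)}
    (hi : (i : ℕ) < 2 ^ (k - 1)) : (goldMat k *ᵥ fun j => f j) i = f (2 * i) + f (2 * i + 1) := by
  have := mul_pow_sub_one hk 2
  rw [mulVec, dotProduct, Fintype.sum_eq_add ⟨2 * i, by omega⟩ ⟨2 * i + 1, by omega⟩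
    (by simp [Fin.ext_iff])]
  · simp [goldMat, hi]
  · rintro j ⟨h₁, h₂⟩
    simp only [goldMat, ne_eq, Fin.ext_iff] at h₁ h₂ ⊢
    rw [if_neg (by omega), zero_mul]

theorem goldMat_mulVec_apply_of_le {k : ℕ} (f : ℕ → ℝ) {i : Fin (2 ^ k)}
    (hi : 2 ^ (k - 1) ≤ (i : ℕ)) : (goldMat k *ᵥ fun j => f j) i = f (2 * (i - 2 ^ (k - 1))) := by
  have hk : k ≠ 0 := by
    rintro rfl
    simpa using hi.trans_lt i.isLt
  have := mul_pow_sub_one hk 2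
  rw [mulVec, dotProduct, Fintype.sum_eq_single ⟨2 * (i - 2 ^ (k - 1)), by omega⟩]
  · simp [goldMat, hi]
  · intro j h
    simp only [goldMat, ne_eq, Fin.ext_iff] at h ⊢
    rw [if_neg (by omega), zero_mul]

theorem goldMat_mulVec_goldWeight {k : ℕ} (hk : k ≠ 0) :
    goldMat k *ᵥ (fun j => goldWeight j) = φ • fun j : Fin (2 ^ k) => goldWeight j := by
  ext i
  rw [Pi.smul_apply, smul_eq_mul]
  rcases lt_or_ge (i : ℕ) (2 ^ (k - 1)) with hi | hi
  · rw [goldMat_mulVec_apply_of_lt hk _ hi, goldWeight_two_mul_add_goldWeight_two_mul_add_one]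
  · obtain ⟨r, hr⟩ := Nat.exists_eq_add_of_le hi
    have := mul_pow_sub_one hk 2
    rw [goldMat_mulVec_apply_of_le _ hi, hr, Nat.add_sub_cancel_left,
      goldWeight_two_mul (m := k - 1) (by omega)]

lemma phi_eq_goldenRatio : phi = φ := rfl

/-- The golden ratio is an eigenvalue of `A_k` with a strictly positive eigenvector,
and it equals the spectral radius: every complex eigenvalue has modulus at most `φ`. -/
theorem goldMat_spectral_radius (k : ℕ) (hk : 1 ≤ k) :
    (∃ w : Fin (2 ^ k) → ℝ, (∀ i, 0 < w i) ∧ (goldMat k).mulVec w = phi • w) ∧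
    ((goldMat k).map (Complex.ofReal)).charpoly.IsRoot (phi : ℂ) ∧
    ∀ μ : ℂ, ((goldMat k).map (Complex.ofReal)).charpoly.IsRoot μ →
      ‖μ‖ ≤ phi := by
  rw [phi_eq_goldenRatio]
  have hw := goldMat_mulVec_goldWeight (Nat.one_le_iff_ne_zero.1 hk)
  have hw_pos : ∀ j : Fin (2 ^ k), 0 < goldWeight j := fun j => goldWeight_pos j
  refine ⟨⟨_, hw_pos, hw⟩, ?_, fun μ hμ => ?_⟩
  · have hw_ne : (fun j : Fin (2 ^ k) => goldWeight j) ≠ 0 :=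
      fun h => (hw_pos ⟨0, Nat.two_pow_pos k⟩).ne' (congrFun h _)
    exact isRoot_charpoly_map_ofReal_of_mulVec_eq_smul hw_ne hw
  · obtain ⟨v, hv, hAv⟩ := (isRoot_charpoly_iff_exists_mulVec_eq_smul _ μ).1 hμ
    exact norm_le_of_mulVec_eq_smul_of_pos (goldMat_nonneg k) hw_pos hw hv hAv
end

section
/- For every k ≥ 1 and every α ∈ ℤ₃: if α = Σ_{j≥0} a_j 3^j with every a_{2j} ∈ {0,1} and every a_{2j+1} = 0, then both α and (3^{2k+1}+1)·α lie in the 3-adic Cantor set Σ₃. -/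
/-! If `α` has its digits in `{0, 1}` on the even positions only, then `(3 ^ c + 1) * α` with `c`
odd is the sum of `α` and a copy of `α` shifted onto the odd positions. The two digit supports are
disjoint, so no carries occur and the digits of the product are still in `{0, 1}`. -/

open scoped BigOperators

theorem PadicInt.summable_mul_pow_of_le {p : ℕ} [Fact p.Prime] (f : ℕ → ℤ_[p]) {e : ℕ → ℕ}
    (he : ∀ n, n ≤ e n) : Summable fun n => f n * (p : ℤ_[p]) ^ e n := by
  have hp : (1 : ℝ) < p := mod_cast (Fact.out : p.Prime).one_lt
  refine .of_norm_bounded (summable_geometric_of_lt_one (by positivity) (inv_lt_one_of_one_lt₀ hp))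
    fun n => ?_
  calc ‖f n * (p : ℤ_[p]) ^ e n‖ ≤ ‖(p : ℤ_[p]) ^ e n‖ := by
        rw [norm_mul]; exact mul_le_of_le_one_left (norm_nonneg _) (PadicInt.norm_le_one _)
    _ = (p : ℝ)⁻¹ ^ e n := by rw [norm_pow, PadicInt.norm_p]
    _ ≤ (p : ℝ)⁻¹ ^ n := pow_le_pow_of_le_one (by positivity)
          (inv_le_one_of_one_le₀ hp.le) (he n)

theorem tsum_mul_three_pow_mem_Sigma3 {ι : Type*} {e : ι → ℕ} (he : Function.Injective e)
    {b : ι → ℕ} (hb : ∀ i, b i ≤ 1) : ∑' i, (b i : ℤ_[3]) * 3 ^ e i ∈ Sigma3 := by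
  refine ⟨Function.extend e b 0, fun m => ?_, ?_⟩
  · by_cases hm : ∃ i, e i = m
    · obtain ⟨i, rfl⟩ := hm
      simpa [he.extend_apply] using hb i
    · simp [Function.extend_apply' _ _ _ hm]
  · rw [← he.tsum_eq (f := fun m => ((Function.extend e b 0 m : ℕ) : ℤ_[3]) * 3 ^ m)]
    · simp [he.extend_apply]
    · intro m hm
      by_contra hm'
      exact hm (by simp [Function.extend_apply' _ _ _ hm'])

theorem Y_subset_C1_N_odd_general (k : ℕ) (α : ℤ_[3])
    (hα : ∃ b : ℕ → ℕ, (∀ n, b n ≤ 1) ∧ α = ∑' n : ℕ, (b n : ℤ_[3]) * 3 ^ (2 * n)) :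
    α ∈ Sigma3 ∧ ((3 : ℤ_[3]) ^ (2 * k + 1) + 1) * α ∈ Sigma3 := by
  obtain ⟨b, hb, rfl⟩ := hα
  set c := 2 * k + 1
  have hpos : Function.Injective (Sum.elim (2 * ·) (2 * · + c)) :=
    (mul_right_injective₀ two_ne_zero).sumElim (fun _ _ h => by omega) fun _ _ => by omega
  have hsplit : ((3 : ℤ_[3]) ^ c + 1) * ∑' n, (b n : ℤ_[3]) * 3 ^ (2 * n) =
      ∑' i, ((Sum.elim b b i : ℕ) : ℤ_[3]) * 3 ^ Sum.elim (2 * ·) (2 * · + c) i := by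
    have hS : Summable fun n => (b n : ℤ_[3]) * 3 ^ (2 * n) :=
      PadicInt.summable_mul_pow_of_le _ (by omega)
    have hS' : Summable fun n => (b n : ℤ_[3]) * 3 ^ (2 * n + c) :=
      PadicInt.summable_mul_pow_of_le _ (by omega)
    rw [Summable.tsum_sum (f := fun i =>
        ((Sum.elim b b i : ℕ) : ℤ_[3]) * 3 ^ Sum.elim (2 * ·) (2 * · + c) i) hS hS',
      add_mul, one_mul, ← hS.tsum_mul_left, add_comm]
    refine congrArg _ (tsum_congr fun n => ?_)
    simp only [Sum.elim_inr, pow_add]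
    ring
  exact ⟨tsum_mul_three_pow_mem_Sigma3 (mul_right_injective₀ two_ne_zero) hb,
    hsplit ▸ tsum_mul_three_pow_mem_Sigma3 hpos (by simp [hb])⟩

theorem Y_subset_C1_N_odd (k : ℕ) (hk : 1 ≤ k) (α : ℤ_[3])
    (hα : ∃ b : ℕ → ℕ, (∀ n, b n ≤ 1) ∧ α = ∑' n : ℕ, (b n : ℤ_[3]) * 3 ^ (2 * n)) :
    α ∈ Sigma3 ∧ ((3 : ℤ_[3]) ^ (2 * k + 1) + 1) * α ∈ Sigma3 :=
  Y_subset_C1_N_odd_general k α hα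
end

section
/- The set {λ ∈ Σ₃ : (3^{2k+1}+1)·λ ∈ Σ₃ for all k ≥ 0} has Hausdorff dimension at least (1/2)·(log 2 / log 3). -/
/-!
Binary sequences `d` are sent to `Σ dⱼ 3^{2j}`, which uses only even 3-adic digits;
multiplying by `3^{2k+1} + 1` adds a copy on odd positions, so no carries occur and the image
lies in the set. If `d` and `d'` first differ at `n`, their images are at 3-adic distance exactly
`3^{-2n}`, while the reals `0.d₀d₁…` and `0.d'₀d'₁…` differ by at most
`2^{-n} = (3^{-2n})^α`, `α = log 2 / (2 log 3)`. So `[0, 1]` is an `α`-Hölder image of the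
embedded set, whence `1 = dimH [0, 1] ≤ dimH (image) / α`.
-/

open scoped BigOperators

open Set Function PiNat
open scoped ENNReal NNReal

theorem dimH_range_le_div_of_edist_le_rpow {X Y Z : Type*} [EMetricSpace Y] [EMetricSpace Z]
    {f : X → Y} {φ : X → Z} {C r : ℝ≥0} (hr : 0 < r)
    (h : ∀ x y, edist (f x) (f y) ≤ C * edist (φ x) (φ y) ^ (r : ℝ)) :
    dimH (range f) ≤ dimH (range φ) / r := by
  rcases isEmpty_or_nonempty X with _ | ⟨⟨x₀⟩⟩
  · simp [range_eq_empty]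
  have hfac : FactorsThrough f φ := fun x y hxy => by
    simpa [hxy, ENNReal.zero_rpow_of_pos (NNReal.coe_pos.mpr hr)] using h x y
  have hF : extend φ f (fun _ => f x₀) ∘ φ = f := funext (hfac.extend_apply _)
  have hF_holder : HolderOnWith C r (extend φ f fun _ => f x₀) (range φ) := by
    rintro _ ⟨x, rfl⟩ _ ⟨y, rfl⟩
    simpa only [← comp_apply (f := extend φ f _), hF] using h x y
  simpa only [← range_comp, hF] using hF_holder.dimH_image_le hr

theorem Real.range_ofDigits {b : ℕ} (hb : 1 < b) : range (ofDigits (b := b)) = Icc 0 1 :=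
  (range_subset_iff.mpr fun d => mem_Icc.mpr ⟨ofDigits_nonneg d, ofDigits_le_one d⟩).antisymm
    (by rw [← image_univ]; exact ofDigits_SurjOn hb)

theorem Real.dimH_Icc {a b : ℝ} (h : a < b) : dimH (Icc a b) = 1 := by
  rw [Real.dimH_of_mem_nhds (x := (a + b) / 2) (Icc_mem_nhds (by linarith) (by linarith)),
    Module.finrank_self, Nat.cast_one]

theorem mem_sigma3_of_hasSum {ι : Type*} {pos : ι → ℕ} (hpos : Injective pos) {d : ι → ℕ}
    (hd : ∀ i, d i ≤ 1) {x : ℤ_[3]} (hx : HasSum (fun i => (d i : ℤ_[3]) * 3 ^ pos i) x) :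
    x ∈ Sigma3 := by
  have hzero : ∀ n ∉ range pos, extend pos d 0 n = 0 := fun n hn => extend_apply' _ _ _ hn
  refine ⟨extend pos d 0, fun n => ?_, ?_⟩
  · by_cases hn : n ∈ range pos
    · obtain ⟨i, rfl⟩ := hn
      exact (hpos.extend_apply d 0 i).trans_le (hd i)
    · simp [hzero n hn]
  · refine ((hpos.hasSum_iff fun n hn => ?_).mp ?_).tsum_eq.symm
    · simp [hzero n hn]
    · simpa only [comp_def, hpos.extend_apply] using hx

theorem PadicInt.norm_three : ‖(3 : ℤ_[3])‖ = 3⁻¹ := by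
  simpa using PadicInt.norm_p (p := 3)

noncomputable def ofEvenDigits (d : ℕ → Fin 2) : ℤ_[3] :=
  ∑' j, ((d j : ℕ) : ℤ_[3]) * 3 ^ (2 * j)

theorem summable_ofEvenDigits (d : ℕ → Fin 2) :
    Summable fun j => ((d j : ℕ) : ℤ_[3]) * 3 ^ (2 * j) := by
  refine Summable.of_norm_bounded
    (summable_geometric_of_lt_one (r := (9 : ℝ)⁻¹) (by norm_num) (by norm_num)) fun j => ?_
  rw [norm_mul, pow_mul, norm_pow, norm_pow, PadicInt.norm_three,
    show (3⁻¹ : ℝ) ^ 2 = 9⁻¹ by norm_num]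
  exact mul_le_of_le_one_left (by positivity) (PadicInt.norm_le_one _)

theorem hasSum_ofEvenDigits (d : ℕ → Fin 2) :
    HasSum (fun j => ((d j : ℕ) : ℤ_[3]) * 3 ^ (2 * j)) (ofEvenDigits d) :=
  (summable_ofEvenDigits d).hasSum

theorem ofEvenDigits_eq_sum_add (d : ℕ → Fin 2) (n : ℕ) :
    ofEvenDigits d = ∑ j ∈ Finset.range n, ((d j : ℕ) : ℤ_[3]) * 3 ^ (2 * j) +
      3 ^ (2 * n) * ofEvenDigits fun j => d (j + n) := by
  rw [ofEvenDigits, ← (summable_ofEvenDigits d).sum_add_tsum_nat_add n, ofEvenDigits,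
    ← (summable_ofEvenDigits _).tsum_mul_left]
  congr 2 with j
  ring

theorem norm_ofEvenDigits_sub_of_apply_zero_ne {d d' : ℕ → Fin 2} (h : d 0 ≠ d' 0) :
    ‖ofEvenDigits d - ofEvenDigits d'‖ = 1 := by
  have hlead : ‖((d 0 : ℕ) : ℤ_[3]) - (d' 0 : ℕ)‖ = 1 := by
    revert h
    generalize d 0 = a
    generalize d' 0 = b
    fin_cases a <;> fin_cases b <;> simp
  have htail (y : ℤ_[3]) : ‖3 ^ 2 * y‖ < 1 := by
    rw [norm_mul, norm_pow, PadicInt.norm_three]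
    nlinarith [PadicInt.norm_le_one y, norm_nonneg y]
  rw [ofEvenDigits_eq_sum_add d 1, ofEvenDigits_eq_sum_add d' 1]
  simp only [Finset.sum_range_one, mul_zero, pow_zero, mul_one]
  rw [add_sub_add_comm, ← mul_sub, IsUltrametricDist.norm_add_eq_max_of_norm_ne_norm
    (hlead ▸ (htail _).ne'), hlead, max_eq_left (htail _).le]

theorem norm_ofEvenDigits_sub {d d' : ℕ → Fin 2} (h : d ≠ d') :
    ‖ofEvenDigits d - ofEvenDigits d'‖ = ((3 : ℝ) ^ (2 * firstDiff d d'))⁻¹ := by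
  set n := firstDiff d d'
  have hprefix : ∑ j ∈ Finset.range n, ((d j : ℕ) : ℤ_[3]) * 3 ^ (2 * j) =
      ∑ j ∈ Finset.range n, ((d' j : ℕ) : ℤ_[3]) * 3 ^ (2 * j) :=
    Finset.sum_congr rfl fun j hj => by
      rw [apply_eq_of_lt_firstDiff (Finset.mem_range.mp hj)]
  have hshift : (fun j => d (j + n)) 0 ≠ (fun j => d' (j + n)) 0 := by
    simpa using apply_firstDiff_ne h
  rw [ofEvenDigits_eq_sum_add d n, ofEvenDigits_eq_sum_add d' n, hprefix, add_sub_add_left_eq_sub,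
    ← mul_sub, norm_mul, norm_ofEvenDigits_sub_of_apply_zero_ne hshift, mul_one, norm_pow,
    PadicInt.norm_three, inv_pow]

theorem ofEvenDigits_mem_sigma3 (d : ℕ → Fin 2) : ofEvenDigits d ∈ Sigma3 :=
  mem_sigma3_of_hasSum (pos := fun j => 2 * j) (fun i j h => by simpa using h)
    (fun j => Nat.lt_succ_iff.mp (d j).isLt) (hasSum_ofEvenDigits d)

theorem three_pow_odd_add_one_mul_ofEvenDigits_mem_sigma3 (d : ℕ → Fin 2) (k : ℕ) :
    ((3 : ℤ_[3]) ^ (2 * k + 1) + 1) * ofEvenDigits d ∈ Sigma3 := by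
  have hpos : Injective (Sum.elim (fun j => 2 * j) fun j => 2 * j + (2 * k + 1)) := by
    rintro (i | i) (j | j) h <;> simp only [Sum.elim_inl, Sum.elim_inr, Sum.inl.injEq,
      Sum.inr.injEq, reduceCtorEq] at h ⊢ <;> omega
  refine mem_sigma3_of_hasSum hpos (d := Sum.elim (fun j => d j) fun j => d j)
    (by rintro (j | j) <;> exact Nat.lt_succ_iff.mp (d j).isLt) ?_
  rw [add_mul, one_mul, add_comm ((3 : ℤ_[3]) ^ (2 * k + 1) * _)]
  refine HasSum.sum (hasSum_ofEvenDigits d) ?_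
  refine ((hasSum_ofEvenDigits d).mul_left ((3 : ℤ_[3]) ^ (2 * k + 1))).congr_fun fun j => ?_
  simp only [comp_apply, Sum.elim_inr]
  ring

theorem inv_three_pow_two_mul_rpow (n : ℕ) :
    ((3 : ℝ) ^ (2 * n))⁻¹ ^ ((1 / 2) * (Real.log 2 / Real.log 3)) = ((2 : ℝ) ^ n)⁻¹ := by
  rw [Real.inv_rpow (by positivity), ← Real.rpow_natCast, ← Real.rpow_mul (by norm_num),
    show ((2 * n : ℕ) : ℝ) * ((1 / 2) * (Real.log 2 / Real.log 3)) = Real.logb 3 2 * n by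
      push_cast; rw [Real.logb]; ring,
    Real.rpow_mul (by norm_num), Real.rpow_logb (by norm_num) (by norm_num) (by norm_num),
    Real.rpow_natCast]

theorem edist_ofDigits_le_edist_ofEvenDigits_rpow (d d' : ℕ → Fin 2) :
    edist (Real.ofDigits d) (Real.ofDigits d') ≤
      edist (ofEvenDigits d) (ofEvenDigits d') ^ ((1 / 2) * (Real.log 2 / Real.log 3)) := by
  rcases eq_or_ne d d' with rfl | h
  · simp
  rw [edist_dist, edist_dist, Real.dist_eq, dist_eq_norm, norm_ofEvenDigits_sub h,
    ENNReal.ofReal_rpow_of_nonneg (by positivity) (by positivity), inv_three_pow_two_mul_rpow]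
  apply ENNReal.ofReal_le_ofReal
  simpa using Real.abs_ofDigits_sub_ofDigits_le (n := firstDiff d d') fun i hi =>
    apply_eq_of_lt_firstDiff (x := d) (y := d') hi

theorem dimH_lower_bound_intersection :
    ENNReal.ofReal ((1 / 2) * (Real.log 2 / Real.log 3)) ≤
      dimH {l : ℤ_[3] | l ∈ Sigma3 ∧
        ∀ k : ℕ, ((3 : ℤ_[3]) ^ (2 * k + 1) + 1) * l ∈ Sigma3} := by
  have hα : 0 < (1 / 2) * (Real.log 2 / Real.log 3) := by positivity
  have hr : 0 < ((1 / 2) * (Real.log 2 / Real.log 3)).toNNReal := Real.toNNReal_pos.mpr hα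
  have hdim : dimH (range (Real.ofDigits (b := 2))) ≤
      dimH (range ofEvenDigits) / ((1 / 2) * (Real.log 2 / Real.log 3)).toNNReal :=
    dimH_range_le_div_of_edist_le_rpow (C := 1) hr fun d d' => by
      simpa only [ENNReal.coe_one, one_mul, Real.coe_toNNReal _ hα.le] using
        edist_ofDigits_le_edist_ofEvenDigits_rpow d d'
  rw [Real.range_ofDigits one_lt_two, Real.dimH_Icc zero_lt_one,
    ENNReal.le_div_iff_mul_le (.inl (ENNReal.coe_ne_zero.mpr hr.ne'))
    (.inl ENNReal.coe_ne_top), one_mul] at hdim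
  refine hdim.trans (dimH_mono ?_)
  rintro _ ⟨d, rfl⟩
  exact ⟨ofEvenDigits_mem_sigma3 d, three_pow_odd_add_one_mul_ofEvenDigits_mem_sigma3 d⟩
end

section
/- Let λ ∈ ℤ₃ be of the form λ = Σ_{j=1}^∞ 3^{ℓ₁+⋯+ℓ_j} where each gap ℓ_j ≥ m+1 for a fixed m ≥ 1 (finite sums allowed). Then for every 1 ≤ k ≤ m, (3^k + 1)·λ ∈ Σ₃. -/
open scoped BigOperators

/-
Multiplying by `3^k + 1` adds to the digit sequence of `λ` its shift by `k`. Since two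
nonzero digits of `λ` are never `k ≤ m` places apart, the two sequences have disjoint
supports, so the sum is again a `{0,1}`-digit sequence and no carries occur.
-/

namespace PadicInt

variable {p : ℕ} [Fact p.Prime]

lemma summable_mul_pow (f : ℕ → ℤ_[p]) : Summable fun n => f n * (p : ℤ_[p]) ^ n := by
  refine Summable.of_norm_bounded (summable_geometric_of_lt_one (r := (p : ℝ)⁻¹)
    (by positivity) (inv_lt_one_of_one_lt₀ (mod_cast (Fact.out : p.Prime).one_lt))) fun n => ?_
  rw [norm_mul, norm_pow, norm_p]
  exact mul_le_of_le_one_left (by positivity) (norm_le_one _)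

lemma pow_mul_tsum_mul_pow (f : ℕ → ℤ_[p]) (k : ℕ) :
    (p : ℤ_[p]) ^ k * ∑' n, f n * (p : ℤ_[p]) ^ n
      = ∑' n, (if k ≤ n then f (n - k) else 0) * (p : ℤ_[p]) ^ n := by
  rw [← (summable_mul_pow fun n => if k ≤ n then f (n - k) else 0).sum_add_tsum_nat_add k,
    ← (summable_mul_pow f).tsum_mul_left,
    Finset.sum_eq_zero fun n hn => by simp [(Finset.mem_range.mp hn).not_ge], zero_add]
  refine tsum_congr fun n => ?_
  rw [if_pos (Nat.le_add_left k n), Nat.add_sub_cancel, pow_add]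
  ring

lemma pow_add_one_mul_tsum_mul_pow (f : ℕ → ℤ_[p]) (k : ℕ) :
    ((p : ℤ_[p]) ^ k + 1) * ∑' n, f n * (p : ℤ_[p]) ^ n
      = ∑' n, (f n + if k ≤ n then f (n - k) else 0) * (p : ℤ_[p]) ^ n := by
  rw [add_mul, one_mul, pow_mul_tsum_mul_pow, add_comm,
    ← (summable_mul_pow _).tsum_add (summable_mul_pow _)]
  exact tsum_congr fun n => (add_mul _ _ _).symm

end PadicInt

lemma add_shift_le_one {a : ℕ → ℕ} {k : ℕ} (ha : ∀ n, a n ≤ 1)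
    (hsep : ∀ i, a i = 1 → a (i + k) = 0) (n : ℕ) :
    a n + (if k ≤ n then a (n - k) else 0) ≤ 1 := by
  split_ifs with hkn
  · have := hsep (n - k)
    rw [Nat.sub_add_cancel hkn] at this
    have := ha n
    have := ha (n - k)
    omega
  · simpa using ha n

theorem mul_three_pow_add_one_mem_Sigma3_general (m : ℕ) (l : ℤ_[3])
    (a : ℕ → ℕ) (ha01 : ∀ n, a n ≤ 1)
    (hgap : ∀ i j, i < j → a i = 1 → a j = 1 → i + (m + 1) ≤ j)
    (hl : l = ∑' n : ℕ, (a n : ℤ_[3]) * 3 ^ n) :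
    ∀ k : ℕ, 1 ≤ k → k ≤ m → ((3 : ℤ_[3]) ^ k + 1) * l ∈ Sigma3 := by
  intro k hk hkm
  have hsep : ∀ i, a i = 1 → a (i + k) = 0 := fun i hi => by
    have := ha01 (i + k)
    have := fun h => hgap i (i + k) (by omega) hi h
    omega
  refine ⟨_, add_shift_le_one ha01 hsep, ?_⟩
  have := PadicInt.pow_add_one_mul_tsum_mul_pow (p := 3) (fun n => (a n : ℤ_[3])) k
  push_cast at this ⊢
  rw [hl, this]

/-- If the nonzero digit positions of `λ` are all ≥ m+1 and pairwise separated by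
gaps of at least `m+1`, with all nonzero digits equal to 1, then `(3^k+1)·λ ∈ Σ₃`
for every `1 ≤ k ≤ m`. -/
theorem mul_three_pow_add_one_mem_Sigma3 (m : ℕ) (hm : 1 ≤ m) (l : ℤ_[3])
    (a : ℕ → ℕ) (ha01 : ∀ n, a n ≤ 1)
    (hfirst : ∀ n, a n = 1 → m + 1 ≤ n)
    (hgap : ∀ i j, i < j → a i = 1 → a j = 1 → i + (m + 1) ≤ j)
    (hl : l = ∑' n : ℕ, (a n : ℤ_[3]) * 3 ^ n) :
    ∀ k : ℕ, 1 ≤ k → k ≤ m → ((3 : ℤ_[3]) ^ k + 1) * l ∈ Sigma3 :=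
  mul_three_pow_add_one_mem_Sigma3_general m l a ha01 hgap hl
end

section
/- For positive integers M₁,…,Mₙ all of whose 3-adic (ternary) digits lie in {0,1}, the set C(1,M₁,…,Mₙ) = {α ∈ Σ₃ : Mᵢ·α ∈ Σ₃ for all i} contains the element Σ_{j=0}^∞ 3^{j(m+1)}, where m = max_i ⌊log₃ Mᵢ⌋; in particular C(1,M₁,…,Mₙ) is infinite. -/
open scoped BigOperators

/-! If `q` exceeds the ternary length of `M`, then `M * ∑ 3 ^ (j * q)` is computed without
carries: its digit sequence is the digit string of `M` repeated with period `q`, so it lies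
in `Σ₃` as soon as the digits of `M` do. Since `∑ 3 ^ (j * q) = (1 - 3 ^ q)⁻¹`, distinct periods
`q > max log₃ Mᵢ` give distinct elements of `C(1, M₁, …, Mₙ)`. -/

open Finset

namespace PadicInt

variable {p : ℕ} [Fact p.Prime]

theorem norm_p_pow_lt_one {q : ℕ} (hq : q ≠ 0) : ‖(p : ℤ_[p]) ^ q‖ < 1 := by
  rw [norm_pow, norm_p]
  exact pow_lt_one₀ (by positivity)
    (inv_lt_one_of_one_lt₀ (mod_cast (Fact.out : p.Prime).one_lt)) hq

theorem summable_mul_p_pow (c : ℕ → ℤ_[p]) : Summable fun k => c k * (p : ℤ_[p]) ^ k := by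
  refine NonarchimedeanAddGroup.summable_of_tendsto_cofinite_zero ?_
  rw [Nat.cofinite_eq_atTop]
  refine squeeze_zero_norm (fun k => ?_) (tendsto_pow_atTop_nhds_zero_of_lt_one (norm_nonneg _)
    (norm_p_pow_lt_one (p := p) one_ne_zero))
  rw [norm_mul, ← norm_pow, pow_one]
  exact mul_le_of_le_one_left (norm_nonneg _) (norm_le_one _)

theorem tsum_p_pow_mul_mul_one_sub {q : ℕ} (hq : q ≠ 0) :
    (∑' j, (p : ℤ_[p]) ^ (j * q)) * (1 - (p : ℤ_[p]) ^ q) = 1 := by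
  simp_rw [mul_comm _ q, pow_mul]
  exact geom_series_mul_neg _ (norm_p_pow_lt_one hq)

/-- Shifting by one period multiplies a `q`-periodic series by `p ^ q`, and `1 - p ^ q` is
inverted by the geometric series. -/
theorem tsum_periodic_mul_p_pow (c : ℕ → ℤ_[p]) {q : ℕ} (hq : q ≠ 0) :
    ∑' k, c (k % q) * (p : ℤ_[p]) ^ k =
      (∑ r ∈ range q, c r * (p : ℤ_[p]) ^ r) * ∑' j, (p : ℤ_[p]) ^ (j * q) := by
  set S := ∑' k, c (k % q) * (p : ℤ_[p]) ^ k with hS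
  have hhead : ∑ k ∈ range q, c (k % q) * (p : ℤ_[p]) ^ k =
      ∑ r ∈ range q, c r * (p : ℤ_[p]) ^ r :=
    sum_congr rfl fun k hk => by rw [Nat.mod_eq_of_lt (mem_range.mp hk)]
  have htail : ∑' k, c ((k + q) % q) * (p : ℤ_[p]) ^ (k + q) = (p : ℤ_[p]) ^ q * S := by
    rw [hS, ← (summable_mul_p_pow _).tsum_mul_left]
    exact tsum_congr fun k => by rw [Nat.add_mod_right, pow_add]; ring
  have hshift : (∑ r ∈ range q, c r * (p : ℤ_[p]) ^ r) + (p : ℤ_[p]) ^ q * S = S := by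
    rw [← hhead, ← htail]
    exact (summable_mul_p_pow fun k => c (k % q)).sum_add_tsum_nat_add q
  calc S = S * ((1 - (p : ℤ_[p]) ^ q) * ∑' j, (p : ℤ_[p]) ^ (j * q)) := by
        rw [mul_comm (1 - _), tsum_p_pow_mul_mul_one_sub hq, mul_one]
    _ = _ := by rw [← mul_assoc]; congr 1; linear_combination -hshift

theorem injOn_tsum_p_pow_mul :
    Set.InjOn (fun q => ∑' j, (p : ℤ_[p]) ^ (j * q)) (Set.Ioi 0) := by
  intro s hs t ht hst
  have hs := tsum_p_pow_mul_mul_one_sub (p := p) (Nat.pos_iff_ne_zero.mp hs)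
  have ht := tsum_p_pow_mul_mul_one_sub (p := p) (Nat.pos_iff_ne_zero.mp ht)
  simp only at hst
  have hpow : ((p ^ s : ℕ) : ℤ_[p]) = ((p ^ t : ℕ) : ℤ_[p]) := by
    push_cast
    linear_combination (1 - (p : ℤ_[p]) ^ s) * ht - (1 - (p : ℤ_[p]) ^ t) * hs
      + (1 - (p : ℤ_[p]) ^ s) * (1 - (p : ℤ_[p]) ^ t) * hst
  exact Nat.pow_right_injective (Fact.out : p.Prime).two_le (Nat.cast_injective hpow)

end PadicInt

theorem Nat.ofDigits_eq_sum_range_getD (b : ℕ) {L : List ℕ} {q : ℕ} (hq : L.length ≤ q) :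
    Nat.ofDigits b L = ∑ r ∈ range q, L.getD r 0 * b ^ r := by
  induction L generalizing q with
  | nil => simp
  | cons d L ih =>
    obtain ⟨q, rfl⟩ : ∃ q', q = q' + 1 := Nat.exists_eq_add_one.mpr (by simp at hq; omega)
    rw [Nat.ofDigits_cons, ih (by simpa using hq), sum_range_succ', mul_sum]
    simp only [List.getD_cons_succ, List.getD_cons_zero, pow_succ, pow_zero, mul_one]
    rw [add_comm]
    exact congrArg₂ _ (sum_congr rfl fun r _ => by ring) rfl

theorem List.getD_le_of_forall_le {L : List ℕ} {c : ℕ} (h : ∀ d ∈ L, d ≤ c) (r : ℕ) :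
    L.getD r 0 ≤ c := by
  rw [List.getD_eq_getElem?_getD]
  cases hr : L[r]? with
  | none => simp
  | some d => exact h d (List.mem_of_getElem? hr)

theorem natCast_mul_tsum_three_pow_mem_sigma3 {M q : ℕ}
    (hdig : ∀ d ∈ Nat.digits 3 M, d ≤ 1) (hM : M < 3 ^ q) (hq : q ≠ 0) :
    (M : ℤ_[3]) * ∑' j, (3 : ℤ_[3]) ^ (j * q) ∈ Sigma3 := by
  have hlen : (Nat.digits 3 M).length ≤ q := (Nat.digits_length_le_iff (by norm_num) M).mpr hM
  have hperiodic := PadicInt.tsum_periodic_mul_p_pow (p := 3)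
    (fun r => ((Nat.digits 3 M).getD r 0 : ℤ_[3])) hq
  rw [← Nat.ofDigits_digits 3 M, Nat.ofDigits_eq_sum_range_getD 3 hlen]
  push_cast at hperiodic ⊢
  exact ⟨fun k => (Nat.digits 3 M).getD (k % q) 0,
    fun k => List.getD_le_of_forall_le hdig _, hperiodic.symm⟩

theorem tsum_three_pow_mem_of_lt {ι : Type*} {M : ι → ℕ}
    (hdig : ∀ i, ∀ d ∈ Nat.digits 3 (M i), d ≤ 1) {q : ℕ} (hM : ∀ i, M i < 3 ^ q) (hq : q ≠ 0) :
    ∑' j, (3 : ℤ_[3]) ^ (j * q) ∈ {α ∈ Sigma3 | ∀ i, (M i : ℤ_[3]) * α ∈ Sigma3} := by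
  refine ⟨?_, fun i => natCast_mul_tsum_three_pow_mem_sigma3 (hdig i) (hM i) hq⟩
  simpa using natCast_mul_tsum_three_pow_mem_sigma3 (M := 1) (by simp)
    (Nat.one_lt_pow hq (by norm_num)) hq

theorem C1_family_infinite_general (n : ℕ) (M : Fin n → ℕ)
    (hdig : ∀ i, ∀ d ∈ Nat.digits 3 (M i), d ≤ 1) :
    (∑' j : ℕ, (3 : ℤ_[3]) ^ (j * (Finset.univ.sup (fun i => Nat.log 3 (M i)) + 1))) ∈
      {α ∈ Sigma3 | ∀ i, (M i : ℤ_[3]) * α ∈ Sigma3} ∧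
    {α ∈ Sigma3 | ∀ i, (M i : ℤ_[3]) * α ∈ Sigma3}.Infinite := by
  set m := Finset.univ.sup fun i => Nat.log 3 (M i)
  have hM : ∀ q, m < q → ∀ i, M i < 3 ^ q := fun q hq i =>
    (Nat.lt_pow_succ_log_self (by norm_num) _).trans_le
      (Nat.pow_le_pow_right (by norm_num) ((le_sup (mem_univ i)).trans_lt hq))
  refine ⟨tsum_three_pow_mem_of_lt hdig (hM _ m.lt_add_one) m.succ_ne_zero, ?_⟩
  exact Set.infinite_of_injOn_mapsTo
    (PadicInt.injOn_tsum_p_pow_mul.mono (Set.Ioi_subset_Ioi m.zero_le))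
    (fun q hq => tsum_three_pow_mem_of_lt hdig (hM q hq) (m.zero_le.trans_lt hq).ne')
    (Set.Ioi_infinite m)

theorem C1_family_infinite (n : ℕ) (M : Fin n → ℕ) (hpos : ∀ i, 0 < M i)
    (hdig : ∀ i, ∀ d ∈ Nat.digits 3 (M i), d ≤ 1) :
    (∑' j : ℕ, (3 : ℤ_[3]) ^ (j * (Finset.univ.sup (fun i => Nat.log 3 (M i)) + 1))) ∈
      {α ∈ Sigma3 | ∀ i, (M i : ℤ_[3]) * α ∈ Sigma3} ∧
    {α ∈ Sigma3 | ∀ i, (M i : ℤ_[3]) * α ∈ Sigma3}.Infinite :=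
  C1_family_infinite_general n M hdig
end

section
/- The 4×4 matrix A with rows (1,1,0,0), (0,0,1,0), (0,0,1,1), (1,0,0,0) has spectral radius equal to the golden ratio (1+√5)/2. -/
/-!
The characteristic polynomial of `A7` factors as `(X² - X - 1)(X² - X + 1)`. The golden ratio `φ`
is a root of the first factor, and every root `μ` of either factor satisfies `μ² = μ ± 1`, hence
`‖μ‖² ≤ ‖μ‖ + 1`, which forces `‖μ‖ ≤ φ`.
-/

/-- Adjacency matrix of the presentation of the path set underlying `C(1,7)`. -/
def A7 : Matrix (Fin 4) (Fin 4) ℂ :=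
  !![1, 1, 0, 0; 0, 0, 1, 0; 0, 0, 1, 1; 1, 0, 0, 0]

open Polynomial Real goldenRatio

lemma A7_charpoly : A7.charpoly = (X ^ 2 - X - 1) * (X ^ 2 - X + 1) := by
  rw [Matrix.charpoly]
  simp [Matrix.det_succ_row_zero, Fin.sum_univ_succ, Matrix.charmatrix_apply, A7,
    Matrix.diagonal, Fin.succAbove]
  ring

lemma le_goldenRatio_of_sq_le_add_one {x : ℝ} (hx : 0 ≤ x) (h : x ^ 2 ≤ x + 1) : x ≤ φ := by
  have hfactor : (x - φ) * (x - ψ) ≤ 0 := by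
    nlinarith [goldenRatio_add_goldenConj, goldenRatio_mul_goldenConj]
  nlinarith [goldenConj_neg]

lemma norm_le_goldenRatio_of_sq_eq_add {𝕜 : Type*} [NormedDivisionRing 𝕜] {z c : 𝕜}
    (hc : ‖c‖ ≤ 1) (h : z ^ 2 = z + c) : ‖z‖ ≤ φ :=
  le_goldenRatio_of_sq_le_add_one (norm_nonneg z) <| calc
    ‖z‖ ^ 2 = ‖z + c‖ := by rw [← norm_pow, h]
    _ ≤ ‖z‖ + ‖c‖ := norm_add_le z c
    _ ≤ ‖z‖ + 1 := by gcongr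

/-- The spectral radius of `A7` is the golden ratio: `(1+√5)/2` is an eigenvalue
and every complex eigenvalue has modulus at most `(1+√5)/2`. -/
theorem A7_spectral_radius_golden :
    A7.charpoly.IsRoot ((((1 + Real.sqrt 5) / 2 : ℝ)) : ℂ) ∧
    ∀ μ : ℂ, A7.charpoly.IsRoot μ → ‖μ‖ ≤ (1 + Real.sqrt 5) / 2 := by
  have hφ : (φ : ℂ) ^ 2 = φ + 1 := by exact_mod_cast goldenRatio_sq
  refine ⟨?_, fun μ hμ => ?_⟩
  · rw [A7_charpoly, IsRoot, eval_mul]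
    simp only [eval_sub, eval_add, eval_pow, eval_X, eval_one]
    linear_combination ((φ : ℂ) ^ 2 - φ + 1) * hφ
  rw [A7_charpoly, IsRoot, eval_mul, mul_eq_zero] at hμ
  simp only [eval_sub, eval_add, eval_pow, eval_X, eval_one] at hμ
  rcases hμ with h | h
  · exact norm_le_goldenRatio_of_sq_eq_add (c := 1) (by simp) (by linear_combination h)
  · exact norm_le_goldenRatio_of_sq_eq_add (c := -1) (by simp) (by linear_combination h)
end
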